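/- arXiv:math/0211023 — 5 statements merged into one kernel-verified Lean document; each statement's English description precedes it below -/
import Mathlib

section
/- (Galvin–Mycielski–Solovay characterization, Theorem 1.2) A set X ⊆ 2^ω has strong measure zero if and only if for every meager set F ⊆ 2^ω one has X + F ≠ 2^ω. -/
open Pointwise

/-- The standard metric on the Cantor space `2^ω = ℕ → ZMod 2`:
`d(x,y) = 2^{-min {n | x n ≠ y n}}` for `x ≠ y`, and `d(x,x) = 0`. -/
noncomputable def cantorDist (x y : ℕ → ZMod 2) : ℝ :=
  haveI := Classical.propDecidable (x = y)
  if x = y then 0 else (2 : ℝ)⁻¹ ^ sInf {n : ℕ | x n ≠ y n}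

/-- The diameter of a set in the Cantor space: the supremum of pairwise distances. -/
noncomputable def cantorDiam (A : Set (ℕ → ZMod 2)) : ℝ :=
  sSup (Set.image2 cantorDist A A)

/-- `X ⊆ 2^ω` has strong measure zero if for every sequence `(ε n)` of positive reals
there is a sequence `(Y n)` of subsets of `X` whose union is `X` with `diam (Y n) < ε n`. -/
def HasStrongMeasureZero (X : Set (ℕ → ZMod 2)) : Prop :=
  ∀ ε : ℕ → ℝ, (∀ n, 0 < ε n) →
    ∃ Y : ℕ → Set (ℕ → ZMod 2), (∀ n, Y n ⊆ X) ∧ X = ⋃ n, Y n ∧ ∀ n, cantorDiam (Y n) < ε n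

namespace GMSAux

abbrev C : Type := ℕ → ZMod 2

lemma add_add_self (x y : C) : x + y + y = x := by
  funext l
  show x l + y l + y l = x l
  rw [add_assoc, CharTwo.add_self_eq_zero, add_zero]

lemma cantorDist_le {x y : C} {n : ℕ} (h : ∀ i < n, x i = y i) :
    cantorDist x y ≤ (2 : ℝ)⁻¹ ^ n := by
  unfold cantorDist
  split
  · positivity
  · rename_i hxy
    apply pow_le_pow_of_le_one (by norm_num) (by norm_num)
    have hne : {n : ℕ | x n ≠ y n}.Nonempty := by
      by_contra hc
      exact hxy (funext fun i => by
        by_contra hi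
        exact hc ⟨i, hi⟩)
    have hmem := Nat.sInf_mem hne
    by_contra hlt
    exact hmem (h _ (by omega))

lemma cantorDist_le_one (x y : C) : cantorDist x y ≤ 1 := by
  have := cantorDist_le (x := x) (y := y) (n := 0) (by omega)
  simpa using this

lemma eq_of_cantorDist_lt {x y : C} {n : ℕ} (h : cantorDist x y < (2 : ℝ)⁻¹ ^ n) :
    ∀ i < n, x i = y i := by
  intro i hi
  by_contra hne
  have hxy : x ≠ y := fun he => hne (congrFun he i)
  unfold cantorDist at h
  rw [if_neg hxy] at h
  have h1 : sInf {n : ℕ | x n ≠ y n} ≤ i := Nat.sInf_le hne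
  have h2 : (2 : ℝ)⁻¹ ^ n < (2 : ℝ)⁻¹ ^ sInf {n : ℕ | x n ≠ y n} := by
    apply pow_lt_pow_right_of_lt_one₀ (by norm_num) (by norm_num)
    omega
  linarith

lemma bddAbove_dists (A : Set C) : BddAbove (Set.image2 cantorDist A A) := by
  refine ⟨1, ?_⟩
  rintro r ⟨x, hx, y, hy, rfl⟩
  exact cantorDist_le_one x y

lemma cantorDiam_le {A : Set C} {n : ℕ} (h : ∀ x ∈ A, ∀ y ∈ A, ∀ i < n, x i = y i) :
    cantorDiam A ≤ (2 : ℝ)⁻¹ ^ n := by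
  apply Real.sSup_le
  · rintro r ⟨x, hx, y, hy, rfl⟩
    exact cantorDist_le (h x hx y hy)
  · positivity

lemma agree_of_cantorDiam_lt {A : Set C} {n : ℕ} (h : cantorDiam A < (2 : ℝ)⁻¹ ^ n) :
    ∀ x ∈ A, ∀ y ∈ A, ∀ i < n, x i = y i := by
  intro x hx y hy
  apply eq_of_cantorDist_lt
  calc cantorDist x y ≤ cantorDiam A :=
        le_csSup (bddAbove_dists A) ⟨x, hx, y, hy, rfl⟩
    _ < _ := h

/-- cylinders -/
def cyl (x : C) (n : ℕ) : Set C := {y : C | ∀ i < n, y i = x i}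

lemma isOpen_cyl (x : C) (n : ℕ) : IsOpen (cyl x n) := by
  have : cyl x n = ⋂ i ∈ Finset.range n, (fun y : C => y i) ⁻¹' {x i} := by
    ext y; simp [cyl]
  rw [this]
  exact isOpen_biInter_finset fun i _ =>
    (isOpen_discrete _).preimage (continuous_apply i)

lemma exists_cyl_subset {U : Set C} (hU : IsOpen U) {x : C} (hx : x ∈ U) :
    ∃ n, cyl x n ⊆ U := by
  obtain ⟨I, u, hIu, hsub⟩ := isOpen_pi_iff.mp hU x hx
  rcases I.eq_empty_or_nonempty with rfl | hne
  · exact ⟨0, fun y _ => hsub (by simp)⟩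
  · refine ⟨I.max' hne + 1, fun y hy => hsub ?_⟩
    intro i hi
    have : y i = x i := hy i (by
      have := Finset.le_max' I i hi; omega)
    rw [this]
    exact (hIu i hi).2

lemma mem_cyl_self (x : C) (n : ℕ) : x ∈ cyl x n := fun _ _ => rfl

lemma uniform_avoid (E : Set C) (hcl : IsClosed E) (hint : interior E = ∅) (n : ℕ) :
    ∃ m, n < m ∧ ∀ σ : C, ∃ τ : C, (∀ i < n, τ i = σ i) ∧
      ∀ y : C, (∀ i < m, y i = τ i) → y ∉ E := by
  have key : ∀ v : Fin n → ZMod 2, ∃ (τ : C) (m : ℕ),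
      (∀ i (h : i < n), τ i = v ⟨i, h⟩) ∧ ∀ y : C, (∀ i < m, y i = τ i) → y ∉ E := by
    intro v
    set σv : C := fun i => if h : i < n then v ⟨i, h⟩ else 0 with hσv
    have hopen : IsOpen (cyl σv n \ E) := (isOpen_cyl σv n).sdiff hcl
    have hne : (cyl σv n \ E).Nonempty := by
      by_contra hc
      rw [Set.not_nonempty_iff_eq_empty, Set.diff_eq_empty] at hc
      have : σv ∈ interior E := by
        rw [mem_interior]
        exact ⟨cyl σv n, hc, isOpen_cyl σv n, mem_cyl_self σv n⟩
      simp [hint] at this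
    obtain ⟨z, hz⟩ := hne
    obtain ⟨m, hm⟩ := exists_cyl_subset hopen hz
    refine ⟨z, m, fun i h => ?_, fun y hy => (hm hy).2⟩
    have := hz.1 i h
    simp only [hσv] at this
    rw [this, dif_pos h]
  choose τf mf hτ hav using key
  refine ⟨max (n + 1) (Finset.univ.sup mf), by omega, fun σ => ?_⟩
  set v : Fin n → ZMod 2 := fun i => σ i.1 with hv
  refine ⟨τf v, fun i h => (hτ v i h), fun y hy => hav v y fun i hi => hy i ?_⟩
  have : mf v ≤ Finset.univ.sup mf := Finset.le_sup (Finset.mem_univ v)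
  omega

lemma meager_decomp {F : Set C} (h : IsMeagre F) :
    ∃ E : ℕ → Set C, (∀ k, IsClosed (E k)) ∧ (∀ k, interior (E k) = ∅) ∧
      (∀ j k, j ≤ k → E j ⊆ E k) ∧ F ⊆ ⋃ k, E k := by
  obtain ⟨S, hnwd, hcnt, hsub⟩ := isMeagre_iff_countable_union_isNowhereDense.mp h
  rcases S.eq_empty_or_nonempty with rfl | hne
  · exact ⟨fun _ => ∅, fun _ => isClosed_empty, fun _ => interior_empty,
      fun _ _ _ => le_refl _, by simpa using hsub⟩
  obtain ⟨f, rfl⟩ := hcnt.exists_eq_range hne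
  refine ⟨fun k => ⋃ i ∈ Finset.range (k + 1), closure (f i), fun k => ?_, fun k => ?_, ?_, ?_⟩
  · exact isClosed_biUnion_finset fun i _ => isClosed_closure
  · induction k with
    | zero =>
      have h0 : IsNowhereDense (f 0) := hnwd _ ⟨0, rfl⟩
      rw [IsNowhereDense] at h0
      simpa using h0
    | succ k ih =>
      simp only at ih
      show interior (⋃ i ∈ Finset.range (k + 2), closure (f i)) = ∅
      have : (⋃ i ∈ Finset.range (k + 2), closure (f i)) =
          (⋃ i ∈ Finset.range (k + 1), closure (f i)) ∪ closure (f (k + 1)) := by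
        ext z; simp [Finset.mem_range]
        constructor
        · rintro ⟨i, hi, hz⟩
          rcases Nat.lt_or_ge i (k+1) with h' | h'
          · exact Or.inl ⟨i, by omega, hz⟩
          · have : i = k + 1 := by omega
            exact Or.inr (this ▸ hz)
        · rintro (⟨i, hi, hz⟩ | hz)
          · exact ⟨i, by omega, hz⟩
          · exact ⟨k+1, by omega, hz⟩
      have h1 : IsNowhereDense (f (k+1)) := hnwd _ ⟨k+1, rfl⟩
      rw [IsNowhereDense] at h1
      rw [this, interior_union_isClosed_of_interior_empty
        (isClosed_biUnion_finset fun i _ => isClosed_closure)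
        (by simpa using h1), ih]
  · intro j k hjk z hz
    simp only [Set.mem_iUnion, Finset.mem_range] at hz ⊢
    obtain ⟨i, hi, hz⟩ := hz
    exact ⟨i, by omega, hz⟩
  · intro z hz
    obtain ⟨s, ⟨i, rfl⟩, hzs⟩ := hsub hz
    exact Set.mem_iUnion.mpr ⟨i, Set.mem_iUnion₂.mpr ⟨i, by simp, subset_closure hzs⟩⟩

lemma le_pair (a b : ℕ) : a ≤ Nat.pair a b := by
  unfold Nat.pair; split <;> omega

lemma direction_mp (X : Set C) (hX : HasStrongMeasureZero X) :
    ∀ F : Set C, IsMeagre F → X + F ≠ Set.univ := by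
  intro F hF
  obtain ⟨E, hEcl, hEint, hEmono, hFE⟩ := meager_decomp hF
  have step : ∀ k nk, ∃ m, nk < m ∧ ∀ σ : C, ∃ τ : C, (∀ i < nk, τ i = σ i) ∧
      ∀ y : C, (∀ i < m, y i = τ i) → y ∉ E k :=
    fun k nk => uniform_avoid (E k) (hEcl k) (hEint k) nk
  obtain ⟨n, hlt, havoid⟩ : ∃ n : ℕ → ℕ, (∀ k, n k < n (k+1)) ∧
      ∀ k, ∀ σ : C, ∃ τ : C, (∀ i < n k, τ i = σ i) ∧
        ∀ y : C, (∀ i < n (k+1), y i = τ i) → y ∉ E k := by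
    refine ⟨fun k => Nat.rec 0 (fun k nk => (step k nk).choose) k, fun k => ?_, fun k => ?_⟩
    · exact (step k _).choose_spec.1
    · exact (step k _).choose_spec.2
  choose τ hτ1 hτ2 using havoid
  -- covers: for every j a cover of X with n-indexed small pieces
  have hcov : ∀ j : ℕ, ∃ Y : ℕ → Set C, (∀ i, Y i ⊆ X) ∧ X = ⋃ i, Y i ∧
      ∀ i, cantorDiam (Y i) < (2 : ℝ)⁻¹ ^ (n (Nat.pair j i + 1)) :=
    fun j => hX _ (fun i => by positivity)
  choose Yf hYsub hYun hYdiam using hcov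
  set Z : ℕ → Set C := fun i => Yf i.unpair.1 i.unpair.2 with hZ
  have hZdiam : ∀ i, cantorDiam (Z i) < (2 : ℝ)⁻¹ ^ (n (i + 1)) := by
    intro i
    have := hYdiam i.unpair.1 i.unpair.2
    rwa [Nat.pair_unpair] at this
  have hZcov : ∀ x ∈ X, ∀ j, ∃ i, j ≤ i ∧ x ∈ Z i := by
    intro x hx j
    have : x ∈ ⋃ b, Yf j b := (hYun j) ▸ hx
    obtain ⟨b, hb⟩ := Set.mem_iUnion.mp this
    refine ⟨Nat.pair j b, le_pair j b, ?_⟩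
    simp only [hZ, Nat.unpair_pair]
    exact hb
  -- centers
  have hwex : ∀ i, ∃ w : C, ∀ x ∈ Z i, ∀ l < n (i+1), x l = w l := by
    intro i
    rcases (Z i).eq_empty_or_nonempty with he | ⟨w0, hw0⟩
    · exact ⟨0, fun x hx => by rw [he] at hx; exact absurd hx (Set.notMem_empty x)⟩
    · exact ⟨w0, fun x hx => agree_of_cantorDiam_lt (hZdiam i) x hx w0 hw0⟩
  choose w hw using hwex
  -- build the translate t by recursion
  obtain ⟨u, hu⟩ : ∃ u : ℕ → C, ∀ i l,
      u (i+1) l = if l < n (i+1) then τ i (u i + w i) l + w i l else 0 :=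
    ⟨fun i => Nat.rec (0 : C)
      (fun i ui => fun l => if l < n (i+1) then τ i (ui + w i) l + w i l else 0) i,
      fun i l => rfl⟩
  have hstep : ∀ i, ∀ l < n i, u (i+1) l = u i l := by
    intro i l hl
    rw [hu i l, if_pos (lt_trans hl (hlt i)), hτ1 i (u i + w i) l hl]
    show u i l + w i l + w i l = u i l
    rw [add_assoc, CharTwo.add_self_eq_zero, add_zero]
  have hmono : ∀ i j, i ≤ j → n i ≤ n j := fun i j hij =>
    monotone_nat_of_le_succ (fun k => le_of_lt (hlt k)) hij
  have hstable : ∀ i j, i ≤ j → ∀ l < n i, u j l = u i l := by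
    intro i j hij
    induction j with
    | zero =>
      have : i = 0 := by omega
      subst this; intro l _; rfl
    | succ j ih =>
      intro l hl
      rcases Nat.lt_or_ge j i with h' | h'
      · have : i = j + 1 := by omega
        subst this; rfl
      · rw [hstep j l (lt_of_lt_of_le hl (hmono i j h')), ih h' l hl]
  have hge : ∀ i, i ≤ n i := by
    intro i
    induction i with
    | zero => omega
    | succ i ih => have := hlt i; omega
  set t : C := fun l => u (l+1) l with hT
  have htu : ∀ i, ∀ l < n (i+1), t l = u (i+1) l := by
    intro i l hl
    show u (l+1) l = u (i+1) l
    rcases Nat.le_total (l+1) (i+1) with h' | h'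
    · exact (hstable (l+1) (i+1) h' l (lt_of_lt_of_le (Nat.lt_succ_self l) (hge (l+1)))).symm
    · exact hstable (i+1) (l+1) h' l hl
  have hkey : ∀ i, ∀ x ∈ Z i, (t + x) ∉ E i := by
    intro i x hx
    apply hτ2 i (u i + w i) (t + x)
    intro l hl
    show t l + x l = τ i (u i + w i) l
    rw [htu i l hl, hu i l, if_pos hl, hw i x hx l hl]
    rw [add_assoc, CharTwo.add_self_eq_zero, add_zero]
  -- conclusion
  intro hcontra
  have htmem : t ∈ X + F := hcontra ▸ Set.mem_univ t
  obtain ⟨x, hx, f, hf, hxf⟩ := Set.mem_add.mp htmem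
  obtain ⟨j, hj⟩ := Set.mem_iUnion.mp (hFE hf)
  obtain ⟨i, hij, hxi⟩ := hZcov x hx j
  have htx : t + x = f := by
    rw [← hxf]
    funext l
    show x l + f l + x l = f l
    rw [add_comm (x l) (f l), add_assoc, CharTwo.add_self_eq_zero, add_zero]
  exact hkey i x hxi (htx ▸ hEmono j i hij hj)

lemma direction_mpr (X : Set C)
    (H : ∀ F : Set C, IsMeagre F → X + F ≠ Set.univ) : HasStrongMeasureZero X := by
  intro ε hε
  have hkex : ∀ m, ∃ k : ℕ, (2:ℝ)⁻¹ ^ k < ε m :=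
    fun m => exists_pow_lt_of_lt_one (hε m) (by norm_num)
  choose k hk using hkex
  -- block structure
  obtain ⟨a, c, ha0, hc0, hca, hasucc⟩ : ∃ a c : ℕ → ℕ, a 0 = 0 ∧ c 0 = 0 ∧
      (∀ j, c (j+1) = c j + 2 ^ a j) ∧
      (∀ j, a (j+1) = max (a j + 1) ((Finset.range (c j + 2 ^ a j)).sup (fun m => k m + 1))) := by
    refine ⟨fun j => (Nat.rec (motive := fun _ => ℕ × ℕ) ((0:ℕ), (0:ℕ)) (fun _ p =>
      (max (p.1 + 1) ((Finset.range (p.2 + 2 ^ p.1)).sup (fun m => k m + 1)), p.2 + 2 ^ p.1)) j).1,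
      fun j => (Nat.rec (motive := fun _ => ℕ × ℕ) ((0:ℕ), (0:ℕ)) (fun _ p =>
      (max (p.1 + 1) ((Finset.range (p.2 + 2 ^ p.1)).sup (fun m => k m + 1)), p.2 + 2 ^ p.1)) j).2,
      rfl, rfl, fun j => rfl, fun j => rfl⟩
  have halt : ∀ j, a j < a (j+1) := by
    intro j; rw [hasucc]; omega
  have hclt : ∀ j, c j < c (j+1) := by
    intro j; rw [hca]
    have : 0 < 2 ^ a j := by positivity
    omega
  have hcmono : ∀ i j, i ≤ j → c i ≤ c j := fun i j hij =>
    monotone_nat_of_le_succ (fun m => le_of_lt (hclt m)) hij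
  have hamono : ∀ i j, i ≤ j → a i ≤ a j := fun i j hij =>
    monotone_nat_of_le_succ (fun m => le_of_lt (halt m)) hij
  have hcle : ∀ j, j ≤ c j := by
    intro j
    induction j with
    | zero => omega
    | succ j ih => have := hclt j; omega
  have hale : ∀ j, j ≤ a j := by
    intro j
    induction j with
    | zero => omega
    | succ j ih => have := halt j; omega
  have hka : ∀ j m, m < c (j+1) → k m + 1 ≤ a (j+1) := by
    intro j m hm
    rw [hasucc j]
    rw [hca j] at hm
    exact le_max_of_le_right (Finset.le_sup (f := fun m => k m + 1) (Finset.mem_range.mpr hm))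
  -- the meager (closed nowhere dense) set F
  set F : Set C := {z : C | ∀ j, ∃ l, a j ≤ l ∧ l < a (j+1) ∧ z l ≠ 0} with hFdef
  have hFcl : IsClosed F := by
    have : F = ⋂ j, ⋃ l ∈ Finset.Ico (a j) (a (j+1)), {z : C | z l ≠ 0} := by
      ext z
      simp only [hFdef, Set.mem_setOf_eq, Set.mem_iInter, Set.mem_iUnion, Finset.mem_Ico,
        exists_prop]
      constructor
      · intro h j; obtain ⟨l, h1, h2, h3⟩ := h j; exact ⟨l, ⟨h1, h2⟩, h3⟩
      · intro h j; obtain ⟨l, ⟨h1, h2⟩, h3⟩ := h j; exact ⟨l, h1, h2, h3⟩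
    rw [this]
    refine isClosed_iInter fun j => isClosed_biUnion_finset fun l _ => ?_
    have : {z : C | z l ≠ 0} = (fun z : C => z l) ⁻¹' ({(0:ZMod 2)}ᶜ) := rfl
    rw [this]
    exact (isClosed_discrete _).preimage (continuous_apply l)
  have hFint : interior F = ∅ := by
    rcases Set.eq_empty_or_nonempty (interior F) with h | ⟨z, hz⟩
    · exact h
    obtain ⟨m, hm⟩ := exists_cyl_subset isOpen_interior hz
    have hwF : (fun l => if l < m then z l else 0 : C) ∈ F :=
      interior_subset (hm (fun i hi => by simp [hi]))
    obtain ⟨l, hl1, hl2, hl3⟩ := hwF m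
    exact absurd (if_neg (by have := hale m; omega)) hl3
  have hFmeagre : IsMeagre F := by
    rw [isMeagre_iff_countable_union_isNowhereDense]
    refine ⟨{F}, ?_, Set.countable_singleton F, by simp⟩
    intro s hs
    rw [Set.mem_singleton_iff] at hs
    subst hs
    rw [IsNowhereDense, hFcl.closure_eq, hFint]
  obtain ⟨t, ht⟩ := (Set.ne_univ_iff_exists_notMem _).mp (H F hFmeagre)
  have hxt : ∀ x ∈ X, ∃ j, ∀ l, a j ≤ l → l < a (j+1) → x l = t l := by
    intro x hx
    have hnotF : x + t ∉ F := by
      intro hmem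
      apply ht
      have hxxt : x + (x + t) = t := by
        funext l
        show x l + (x l + t l) = t l
        rw [← add_assoc, CharTwo.add_self_eq_zero, zero_add]
      exact hxxt ▸ Set.add_mem_add hx hmem
    simp only [hFdef, Set.mem_setOf_eq, not_forall] at hnotF
    obtain ⟨j, hj⟩ := hnotF
    push_neg at hj
    refine ⟨j, fun l h1 h2 => ?_⟩
    have h0 : x l + t l = 0 := hj l h1 h2
    calc x l = x l + t l + t l := by rw [add_assoc, CharTwo.add_self_eq_zero, add_zero]
      _ = 0 + t l := by rw [h0]
      _ = t l := zero_add _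
  -- pattern enumeration
  have enc : ∀ m : ℕ, (Fin m → ZMod 2) ≃ Fin (2 ^ m) := fun m =>
    Fintype.equivFinOfCardEq (by simp [ZMod.card])
  -- block index of an index m
  obtain ⟨jn, hjn1, hjn2⟩ : ∃ jn : ℕ → ℕ, (∀ m, c (jn m) ≤ m) ∧ (∀ m, m < c (jn m + 1)) := by
    refine ⟨fun m => Nat.findGreatest (fun j => c j ≤ m) m, fun m => ?_, fun m => ?_⟩
    · exact Nat.findGreatest_spec (P := fun j => c j ≤ m) (m := 0) (Nat.zero_le m) (by omega)
    · by_contra hcon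
      push_neg at hcon
      have h1 := le_trans (hcle _) hcon
      have := Nat.le_findGreatest (P := fun j => c j ≤ m) h1 hcon
      omega
  have hjnu : ∀ m j, c j ≤ m → m < c (j+1) → jn m = j := by
    intro m j h1 h2
    rcases lt_trichotomy (jn m) j with h | h | h
    · have hx1 : c (jn m + 1) ≤ c j := hcmono _ _ (by omega)
      have hx2 := hjn2 m
      omega
    · exact h
    · have hx1 : c (j+1) ≤ c (jn m) := hcmono _ _ (by omega)
      have hx2 := hjn1 m
      omega
  have hpf : ∀ m, m - c (jn m) < 2 ^ a (jn m) := by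
    intro m
    have h1 := hjn1 m
    have h2 := hjn2 m
    rw [hca] at h2
    omega
  set pat : ℕ → C := fun m l =>
    if hl : l < a (jn m) then (enc (a (jn m))).symm ⟨m - c (jn m), hpf m⟩ ⟨l, hl⟩ else t l
    with hpat
  have hpat_low : ∀ m l (hl : l < a (jn m)),
      pat m l = (enc (a (jn m))).symm ⟨m - c (jn m), hpf m⟩ ⟨l, hl⟩ := by
    intro m l hl
    simp only [hpat, dif_pos hl]
  have hpat_high : ∀ m l, a (jn m) ≤ l → pat m l = t l := by
    intro m l hl
    simp only [hpat, dif_neg (by omega : ¬ l < a (jn m))]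
  refine ⟨fun m => X ∩ cyl (pat m) (a (jn m + 1)), fun m => Set.inter_subset_left, ?_, ?_⟩
  · -- coverage
    apply Set.Subset.antisymm
    · intro x hx
      obtain ⟨j, hj⟩ := hxt x hx
      set m := c j + ((enc (a j)) (fun i : Fin (a j) => x i.1)).val with hm
      have hm1 : c j ≤ m := Nat.le_add_right _ _
      have hm2 : m < c (j+1) := by
        rw [hca]
        have := ((enc (a j)) (fun i : Fin (a j) => x i.1)).isLt
        omega
      have hjm : jn m = j := hjnu m j hm1 hm2
      refine Set.mem_iUnion.mpr ⟨m, hx, ?_⟩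
      intro l hl
      by_cases hl' : l < a (jn m)
      · rw [hpat_low m l hl']
        have hfin : (⟨m - c (jn m), hpf m⟩ : Fin (2 ^ a (jn m))) =
            enc (a (jn m)) (fun i : Fin (a (jn m)) => x i.1) := by
          apply Fin.ext
          show m - c (jn m) = ((enc (a (jn m))) (fun i : Fin (a (jn m)) => x i.1)).val
          rw [hjm, hm]
          omega
        rw [hfin, Equiv.symm_apply_apply]
      · rw [hpat_high m l (by omega)]
        rw [hjm] at hl
        rw [hjm] at hl'
        exact hj l (by omega) hl
    · exact Set.iUnion_subset fun m => Set.inter_subset_left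
  · -- diameters
    intro m
    have hle1 : cantorDiam (X ∩ cyl (pat m) (a (jn m + 1))) ≤ (2:ℝ)⁻¹ ^ (a (jn m + 1)) := by
      apply cantorDiam_le
      intro x hx y hy i hi
      rw [hx.2 i hi, hy.2 i hi]
    calc cantorDiam (X ∩ cyl (pat m) (a (jn m + 1))) ≤ (2:ℝ)⁻¹ ^ (a (jn m + 1)) := hle1
      _ ≤ (2:ℝ)⁻¹ ^ (k m + 1) :=
          pow_le_pow_of_le_one (by norm_num) (by norm_num) (hka (jn m) m (hjn2 m))
      _ < (2:ℝ)⁻¹ ^ (k m) :=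
          pow_lt_pow_right_of_lt_one₀ (by norm_num) (by norm_num) (by omega)
      _ < ε m := hk m

end GMSAux

/-- Galvin–Mycielski–Solovay: `X ⊆ 2^ω` has strong measure zero iff `X + F ≠ 2^ω` for
every meager set `F ⊆ 2^ω`. -/
theorem hasStrongMeasureZero_iff_add_meager_ne_univ (X : Set (ℕ → ZMod 2)) :
    HasStrongMeasureZero X ↔
      ∀ F : Set (ℕ → ZMod 2), IsMeagre F → X + F ≠ Set.univ := by
  exact ⟨GMSAux.direction_mp X, GMSAux.direction_mpr X⟩
end

section
/- (Erdős–Kunen–Mauldin, Theorem cited as 3.3.9) For every infinite set X ⊆ 2^ω and every real ε > 0 there exists a clopen set C ⊆ 2^ω such that μ(C) < ε and X + C = 2^ω. -/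
open MeasureTheory Pointwise

/-- The standard product (Haar) probability measure on the Cantor space
`2^ω = ℕ → ZMod 2`, normalized so that the whole space has measure `1`. -/
noncomputable def cantorMeasure : Measure (ℕ → ZMod 2) :=
  Measure.addHaarMeasure
    ⟨⟨Set.univ, isCompact_univ⟩, by rw [interior_univ]; exact Set.univ_nonempty⟩

/-!
Let `p` be an accumulation point of `X`. Picking points of `X` ever closer to `p` gives
`y₀, y₁, … ∈ X` whose first differences `s₀ < s₁ < …` from `p` increase, so the matrix
`((yᵢ - p) sⱼ)ᵢⱼ` is upper triangular with nonzero diagonal. Hence, for `N = 2 ^ r`, some linear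
map `σ : 2^ω → (ℤ/2)^r` reading only the coordinates `s₀, …, s_{N-1}` sends `y₀, …, y_{N-1}`
onto `(ℤ/2)^r`. Its kernel is then a clopen subgroup of index `2 ^ r`, hence of measure `2⁻ʳ`,
and every coset of it meets `X`, i.e. `X + ker σ = 2^ω`.
-/

open Set PiNat

instance : cantorMeasure.IsAddLeftInvariant := by
  unfold cantorMeasure; infer_instance

theorem cantorMeasure_univ : cantorMeasure univ = 1 :=
  Measure.addHaarMeasure_self

theorem Set.Infinite.exists_seq_strictMono_firstDiff {α : Type*} [Finite α] {X : Set (ℕ → α)}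
    (hX : X.Infinite) :
    ∃ p : ℕ → α, ∃ y : ℕ → ℕ → α, (∀ k, y k ∈ X ∧ y k ≠ p) ∧
      StrictMono fun k ↦ firstDiff (y k) p := by
  let _ : TopologicalSpace α := ⊥
  have : DiscreteTopology α := ⟨rfl⟩
  obtain ⟨p, hp⟩ := hX.exists_accPt_principal
  have hnear : ∀ n, ∃ x ∈ X, x ≠ p ∧ n ≤ firstDiff x p := fun n ↦ by
    obtain ⟨x, ⟨hxn, hxX⟩, hxp⟩ := accPt_iff_nhds.1 hp _
      ((isOpen_cylinder _ p n).mem_nhds (self_mem_cylinder p n))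
    exact ⟨x, hxX, hxp, (mem_cylinder_iff_le_firstDiff hxp n).1 hxn⟩
  choose f hfX hfp hfn using hnear
  let n : ℕ → ℕ := fun k ↦ Nat.rec 0 (fun _ m ↦ firstDiff (f m) p + 1) k
  refine ⟨p, fun k ↦ f (n k), fun k ↦ ⟨hfX _, hfp _⟩, strictMono_nat_of_lt_succ fun k ↦ ?_⟩
  exact Nat.lt_of_succ_le (hfn (n (k + 1)))

theorem Matrix.IsUpperTriangular.exists_linearMap_apply_row {K V n : Type*} [Field K]
    [AddCommGroup V] [Module K V] [Fintype n] [LinearOrder n] {A : Matrix n n K}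
    (hA : A.IsUpperTriangular) (hdiag : ∀ i, A i i ≠ 0) (w : n → V) :
    ∃ L : (n → K) →ₗ[K] V, ∀ i, L (A i) = w i := by
  classical
  have hli : LinearIndependent K fun i ↦ A i := by
    refine linearIndependent_rows_of_det_ne_zero ?_
    rw [det_of_isUpperTriangular hA]
    exact Finset.prod_ne_zero_iff.2 fun i _ ↦ hdiag i
  let b := basisOfPiSpaceOfLinearIndependent hli
  refine ⟨b.constr K w, fun i ↦ ?_⟩
  simpa [b] using b.constr_basis K w i

theorem Set.Infinite.exists_continuous_linearMap_surjOn {K V : Type*} [Field K] [Finite K]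
    [TopologicalSpace K] [DiscreteTopology K] [AddCommGroup V] [Module K V] [Finite V]
    [TopologicalSpace V] {X : Set (ℕ → K)} (hX : X.Infinite) :
    ∃ σ : (ℕ → K) →ₗ[K] V, Continuous σ ∧ SurjOn σ X univ := by
  obtain ⟨p, y, hy, hs⟩ := hX.exists_seq_strictMono_firstDiff
  let e : Fin (Nat.card V) ≃ V := (Finite.equivFin V).symm
  let s : Fin (Nat.card V) → ℕ := fun j ↦ firstDiff (y j) p
  let A : Matrix (Fin (Nat.card V)) (Fin (Nat.card V)) K := fun i j ↦ (y i - p) (s j)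
  have hA : A.IsUpperTriangular := fun i j hji ↦
    sub_eq_zero.2 (apply_eq_of_lt_firstDiff (hs hji))
  have hdiag : ∀ i, A i i ≠ 0 := fun i ↦ sub_ne_zero.2 (apply_firstDiff_ne (hy i).2)
  obtain ⟨L, hL⟩ := hA.exists_linearMap_apply_row hdiag e
  let σ := L ∘ₗ LinearMap.funLeft K K s
  have hσ : ∀ i : Fin (Nat.card V), σ (y i) = e i + σ p := fun i ↦ by
    rw [← hL i, ← sub_add_cancel (y i) p, map_add]
    rfl
  have hσc : Continuous σ :=
    (continuous_of_discreteTopology (f := L)).comp (continuous_pi fun j ↦ continuous_apply (s j))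
  refine ⟨σ, hσc, fun v _ ↦ ⟨y (e.symm (v - σ p)), (hy _).1, ?_⟩⟩
  rw [hσ, Equiv.apply_symm_apply, sub_add_cancel]

theorem AddMonoidHom.card_mul_measure_preimage_zero {G H : Type*} [AddGroup G]
    [MeasurableSpace G] [MeasurableAdd G] [AddGroup H] [Finite H] {σ : G →+ H}
    (hσ : Function.Surjective σ) (hker : MeasurableSet (σ ⁻¹' {0})) (μ : Measure G)
    [μ.IsAddLeftInvariant] : Nat.card H * μ (σ ⁻¹' {0}) = μ univ := by
  rw [← coe_ker] at hker ⊢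
  rw [← AddSubgroup.index_mul_measure _ hker, AddSubgroup.index_ker,
    range_eq_top.2 hσ, AddSubgroup.card_top]

theorem AddMonoidHom.add_preimage_zero_eq_univ {G H : Type*} [AddGroup G] [AddGroup H]
    (σ : G →+ H) {X : Set G} (hX : SurjOn σ X univ) : X + σ ⁻¹' {0} = univ := by
  refine eq_univ_of_forall fun z ↦ ?_
  obtain ⟨x, hxX, hx⟩ := hX (mem_univ (σ z))
  refine ⟨x, hxX, -x + z, ?_, add_neg_cancel_left x z⟩
  simp [hx]

/-- Erdős–Kunen–Mauldin: for every infinite `X ⊆ 2^ω` and every `ε > 0` there is a clopen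
set `C` with `μ(C) < ε` and `X + C = 2^ω`. -/
theorem exists_clopen_small_add_eq_univ (X : Set (ℕ → ZMod 2)) (hX : X.Infinite)
    (ε : ℝ) (hε : 0 < ε) :
    ∃ C : Set (ℕ → ZMod 2), IsClopen C ∧ cantorMeasure C < ENNReal.ofReal ε ∧
      X + C = Set.univ := by
  obtain ⟨r, hr⟩ := ENNReal.exists_inv_two_pow_lt (ENNReal.ofReal_pos.2 hε).ne'
  obtain ⟨σ, hσc, hσX⟩ := hX.exists_continuous_linearMap_surjOn (V := Fin r → ZMod 2)
  have hC : IsClopen (σ ⁻¹' {0}) := (isClopen_discrete _).preimage hσc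
  have hμ := σ.toAddMonoidHom.card_mul_measure_preimage_zero hσX.surjective
    hC.isOpen.measurableSet cantorMeasure
  rw [Nat.card_fun, Nat.card_zmod, Nat.card_fin, cantorMeasure_univ, Nat.cast_pow,
    Nat.cast_ofNat] at hμ
  refine ⟨σ ⁻¹' {0}, hC, ?_, σ.toAddMonoidHom.add_preimage_zero_eq_univ hσX⟩
  calc cantorMeasure (σ ⁻¹' {0}) = (2 ^ r)⁻¹ :=
        ENNReal.eq_inv_of_mul_eq_one_left (by rwa [mul_comm])
    _ = 2⁻¹ ^ r := ENNReal.inv_pow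
    _ < ENNReal.ofReal ε := hr
end

section
/- For every infinite set X ⊆ 2^ω, every real ε > 0 and every m ∈ ℕ, there exists a clopen set C ⊆ 2^ω determined by a finite set of coordinates disjoint from {0, 1, …, m} such that μ(C) < ε and X + C = 2^ω. -/
/-! Choose `t` with `2⁻ᵗ < ε` and put `W = (ℤ/2)ᵗ`. Since `X` is infinite, so is its image
under restriction to the coordinates `> m`, and over a finite field an infinite set contains
arbitrarily large linearly independent families. Take such a family `(x_w)_{w ∈ W}` in `X`;
finitely many coordinates `S` already keep the restrictions independent, so some linear map
`τ : 2^ω → W` depending only on the coordinates in `S` sends `x_w` to `w`. Then `C = ker τ`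
works: `z = x_{τ z} + (z - x_{τ z})` gives `X + C = 2^ω`, and `C` has index `2ᵗ`, so by
invariance of Haar measure `μ(C) = 2⁻ᵗ < ε`. -/

open MeasureTheory Pointwise Function

/-- A set `C ⊆ 2^ω` is determined by a finite set `S` of coordinates if membership in `C`
depends only on the restriction to `S`. -/
def DeterminedBy (C : Set (ℕ → ZMod 2)) (S : Finset ℕ) : Prop :=
  ∀ x ∈ C, ∀ y : ℕ → ZMod 2, (∀ i ∈ S, y i = x i) → y ∈ C

theorem Set.Infinite.exists_linearIndependent_mem {K V : Type*} [DivisionRing K] [Finite K]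
    [AddCommGroup V] [Module K V] {s : Set V} (hs : s.Infinite) (ι : Type*) [Finite ι] :
    ∃ u : ι → V, LinearIndependent K u ∧ ∀ j, u j ∈ s := by
  obtain ⟨b, hbs, hspan, hb⟩ := exists_linearIndependent K s
  have hb_inf : b.Infinite := by
    intro hb_fin
    have : Module.Finite K (Submodule.span K b) := Module.Finite.span_of_finite K hb_fin
    have : Finite (Submodule.span K s) := hspan ▸ Module.finite_of_finite K
    exact hs ((Set.finite_coe_iff.mp this).subset Submodule.subset_span)
  obtain ⟨f, hf⟩ := Countable.exists_injective_nat ι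
  exact ⟨fun j => hb_inf.natEmbedding _ (f j),
    hb.comp _ ((hb_inf.natEmbedding _).injective.comp hf),
    fun j => hbs (hb_inf.natEmbedding _ (f j)).2⟩

/-- Each nonzero combination of the family is nonzero at some coordinate, and over a finite ring
there are only finitely many combinations. -/
theorem LinearIndependent.exists_finset_restrict_linearIndependent {K α ι : Type*} [Ring K]
    [Finite K] [Fintype ι] {u : ι → α → K} (hu : LinearIndependent K u) :
    ∃ S : Finset α,
      LinearIndependent K (fun j => LinearMap.funLeft K K ((↑) : S → α) (u j)) := by
  have hne (c : {c : ι → K // c ≠ 0}) : ∃ i, (∑ j, c.1 j • u j) i ≠ 0 :=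
    Function.ne_iff.mp fun h => c.2 (funext (Fintype.linearIndependent_iff.mp hu c.1 h))
  choose f hf using hne
  refine ⟨(Set.finite_range f).toFinset, Fintype.linearIndependent_iff.mpr fun c hc => ?_⟩
  suffices c = 0 from congrFun this
  by_contra hc0
  apply hf ⟨c, hc0⟩
  simpa [Finset.sum_apply] using congrFun hc ⟨f ⟨c, hc0⟩, by simp⟩

theorem LinearIndependent.exists_linearMap_apply_eq {K V W ι : Type*} [DivisionRing K]
    [AddCommGroup V] [Module K V] [AddCommGroup W] [Module K W] [Fintype ι] {v : ι → V}
    (hv : LinearIndependent K v) (w : ι → W) :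
    ∃ σ : V →ₗ[K] W, ∀ j, σ (v j) = w j := by
  classical
  obtain ⟨g, hg⟩ := (Fintype.linearCombination K v).exists_leftInverse_of_injective
    (LinearMap.ker_eq_bot.mpr hv.fintypeLinearCombination_injective)
  refine ⟨Fintype.linearCombination K w ∘ₗ g, fun j => ?_⟩
  have hgv : g (v j) = Pi.single j 1 := by
    simpa using LinearMap.congr_fun hg (Pi.single j 1)
  simp [hgv]

theorem Set.Infinite.image_subtypeRestrict {α β : Type*} [Finite β] {p : α → Prop}
    [Finite {i // ¬p i}] {X : Set (α → β)} (hX : X.Infinite) :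
    (Subtype.restrict p '' X).Infinite := by
  intro himage
  refine hX (Set.Finite.of_finite_image (f := fun y => (Subtype.restrict p y,
    Subtype.restrict (¬p ·) y)) ((himage.prod Set.finite_univ).subset ?_) ?_)
  · rintro _ ⟨y, hy, rfl⟩
    exact ⟨Set.mem_image_of_mem _ hy, Set.mem_univ _⟩
  · intro y _ z _ hyz
    funext i
    by_cases hi : p i
    · exact congrFun (congrArg Prod.fst hyz) ⟨i, hi⟩
    · exact congrFun (congrArg Prod.snd hyz) ⟨i, hi⟩

theorem Set.Infinite.exists_tail_linearMap_surjOn {K : Type*} [Field K] [Finite K]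
    {X : Set (ℕ → K)} (hX : X.Infinite) (m : ℕ) (W : Type*) [AddCommGroup W] [Module K W]
    [Finite W] :
    ∃ (S : Finset ℕ) (τ : (ℕ → K) →ₗ[K] W), (∀ i ∈ S, m < i) ∧
      (∀ x y, (∀ i ∈ S, x i = y i) → τ x = τ y) ∧ ∀ w, ∃ x ∈ X, τ x = w := by
  have : Fintype W := Fintype.ofFinite W
  have : Finite {i // ¬m < i} := by
    simp only [not_lt]
    exact (Set.finite_Iic m).to_subtype
  obtain ⟨u, hu, huX⟩ :=
    (hX.image_subtypeRestrict (p := (m < ·))).exists_linearIndependent_mem (K := K) W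
  choose x hxX hxu using huX
  obtain ⟨S, hS⟩ := hu.exists_finset_restrict_linearIndependent
  obtain ⟨σ, hσ⟩ := hS.exists_linearMap_apply_eq id
  refine ⟨S.map (Embedding.subtype _), σ ∘ₗ LinearMap.funLeft K K (fun i : S => i.1.1),
    ?_, ?_, fun w => ⟨x w, hxX w, ?_⟩⟩
  · simp only [Finset.mem_map, Embedding.coe_subtype]
    rintro _ ⟨i, -, rfl⟩
    exact i.2
  · intro y z hyz
    simp only [LinearMap.comp_apply]
    congr 1
    funext i
    exact hyz _ (Finset.mem_map_of_mem _ i.2)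
  · exact (congrArg (σ ∘ LinearMap.funLeft K K Subtype.val) (hxu w)).trans (hσ w)

instance : IsProbabilityMeasure cantorMeasure := ⟨Measure.addHaarMeasure_self⟩

instance inst_s6 : cantorMeasure.IsAddLeftInvariant := by
  unfold cantorMeasure
  infer_instance

theorem measure_ker_eq_inv_card {G H : Type*} [MeasurableSpace G] [AddGroup G] [MeasurableAdd G]
    [AddGroup H] [Finite H] (μ : Measure G) [IsProbabilityMeasure μ] [μ.IsAddLeftInvariant]
    (f : G →+ H) (hf : Surjective f) (hmeas : MeasurableSet (f.ker : Set G)) :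
    μ f.ker = (Nat.card H : ENNReal)⁻¹ := by
  have hindex : f.ker.index = Nat.card H := by
    rw [AddSubgroup.index_ker, AddMonoidHom.range_eq_top.mpr hf, AddSubgroup.card_top]
  have := AddSubgroup.index_mul_measure f.ker hmeas μ
  rw [hindex, measure_univ] at this
  exact ENNReal.eq_inv_of_mul_eq_one_left (by rwa [mul_comm] at this)

theorem AddMonoidHom.add_ker_eq_univ {G H : Type*} [AddGroup G] [AddGroup H] (f : G →+ H)
    {X : Set G} (hX : ∀ h, ∃ x ∈ X, f x = h) : X + (f.ker : Set G) = Set.univ := by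
  refine Set.eq_univ_of_forall fun z => ?_
  obtain ⟨x, hx, hfx⟩ := hX (f z)
  exact ⟨x, hx, -x + z, by simp [hfx], add_neg_cancel_left x z⟩

theorem DeterminedBy.isClopen {C : Set (ℕ → ZMod 2)} {S : Finset ℕ} (h : DeterminedBy C S) :
    IsClopen C := by
  have hC : C = S.restrict ⁻¹' (S.restrict '' C) := by
    refine (Set.subset_preimage_image _ _).antisymm ?_
    rintro y ⟨x, hx, hxy⟩
    exact h x hx y fun i hi => (congrFun hxy ⟨i, hi⟩).symm
  rw [hC]
  exact (isClopen_discrete _).preimage (Finset.continuous_restrict S)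

/-- For every infinite `X ⊆ 2^ω`, every `ε > 0` and every `m`, there is a clopen set `C`
determined by a finite set of coordinates disjoint from `{0, 1, …, m}` with `μ(C) < ε` and
`X + C = 2^ω`. -/
theorem exists_clopen_small_add_eq_univ_avoiding (X : Set (ℕ → ZMod 2)) (hX : X.Infinite)
    (ε : ℝ) (hε : 0 < ε) (m : ℕ) :
    ∃ (C : Set (ℕ → ZMod 2)) (S : Finset ℕ), IsClopen C ∧ DeterminedBy C S ∧
      (∀ i ∈ S, m < i) ∧ cantorMeasure C < ENNReal.ofReal ε ∧ X + C = Set.univ := by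
  obtain ⟨t, ht⟩ := ENNReal.exists_inv_two_pow_lt (ENNReal.ofReal_pos.mpr hε).ne'
  obtain ⟨S, τ, hSm, hτS, hτX⟩ := hX.exists_tail_linearMap_surjOn m (Fin t → ZMod 2)
  have hC : DeterminedBy τ.toAddMonoidHom.ker S := fun x hx y hy => by
    simpa [hτS y x hy] using hx
  refine ⟨τ.toAddMonoidHom.ker, S, hC.isClopen, hC, hSm, ?_,
    τ.toAddMonoidHom.add_ker_eq_univ hτX⟩
  rw [measure_ker_eq_inv_card cantorMeasure _ (fun w => (hτX w).imp fun _ => And.right)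
    hC.isClopen.isOpen.measurableSet]
  simpa [Nat.card_fun, ENNReal.inv_pow] using ht
end

section
/- (Laver tree dichotomy, Lemma on fronts) Let p be a Laver tree and B ⊆ p a set of nodes of p. Then either there exists a Laver tree q ⊆ p with stem(q) = stem(p) such that q ∩ B = ∅, or there exists a Laver tree q ⊆ p with stem(q) = stem(p) such that every infinite branch of q has an initial segment in B (i.e., B is a front in q). -/
/-!
Call a node `s` good if some Laver subtree of `p` with stem `s` has `B` as a front. Nodes with
an initial segment in `B` are good, and a node with infinitely many good immediate successors is
good, since the witnessing subtrees amalgamate into one with stem `s`. So if the stem of `p` is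
not good, the nodes of `p` with no good node between the stem and themselves still have infinitely
many immediate successors each, and form a Laver tree avoiding `B`.
-/

/-- `p ⊆ ω^{<ω}` is a Laver tree with stem `stem`: `p` contains `stem`, is closed under
initial segments, every node of `p` is comparable with `stem`, and every node extending
`stem` has infinitely many immediate successors in `p`. -/
def IsLaverTreeWithStem (p : Set (List ℕ)) (stem : List ℕ) : Prop :=
  stem ∈ p ∧
  (∀ s ∈ p, ∀ t : List ℕ, t <+: s → t ∈ p) ∧
  (∀ s ∈ p, s <+: stem ∨ stem <+: s) ∧
  (∀ s ∈ p, stem <+: s → {n : ℕ | s ++ [n] ∈ p}.Infinite)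

def IsFront (B q : Set (List ℕ)) : Prop :=
  ∀ x : ℕ → ℕ, (∀ n, (List.range n).map x ∈ q) → ∃ n, (List.range n).map x ∈ B

def HasFrontSubtree (p B : Set (List ℕ)) (s : List ℕ) : Prop :=
  ∃ q ⊆ p, IsLaverTreeWithStem q s ∧ IsFront B q

def frontlessSubtree (p B : Set (List ℕ)) (stem : List ℕ) : Set (List ℕ) :=
  {t ∈ p | ∀ u, stem <+: u → u <+: t → ¬ HasFrontSubtree p B u}

theorem map_range_prefix_map_range {α : Type*} (x : ℕ → α) {m n : ℕ} (h : m ≤ n) :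
    (List.range m).map x <+: (List.range n).map x := by
  apply List.IsPrefix.map
  rw [List.prefix_iff_eq_take]
  simp [Nat.min_eq_left h]

namespace IsLaverTreeWithStem

variable {p q : Set (List ℕ)} {stem s t : List ℕ}

theorem prefix_of_length_le (hq : IsLaverTreeWithStem q s) (ht : t ∈ q)
    (hlen : s.length ≤ t.length) : s <+: t := by
  rcases hq.2.2.1 t ht with h | h
  · exact (h.eq_of_length_le hlen).symm ▸ List.prefix_rfl
  · exact h

theorem map_range_length_eq (hq : IsLaverTreeWithStem q s) {x : ℕ → ℕ}
    (hx : ∀ n, (List.range n).map x ∈ q) (hts : t <+: s) :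
    (List.range t.length).map x = t := by
  have hlen : ((List.range t.length).map x).length = t.length := by simp
  rcases hq.2.2.1 _ (hx t.length) with h | h
  · exact (List.prefix_of_prefix_length_le h hts hlen.le).eq_of_length hlen
  · exact ((hts.trans h).eq_of_length hlen.symm).symm

theorem isFront_of_prefix_mem (hq : IsLaverTreeWithStem q s) {B : Set (List ℕ)} (htB : t ∈ B)
    (hts : t <+: s) : IsFront B q :=
  fun _ hx => ⟨t.length, (hq.map_range_length_eq hx hts).symm ▸ htB⟩

theorem cone (hp : IsLaverTreeWithStem p stem) (hs : s ∈ p) (hstem : stem <+: s) :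
    IsLaverTreeWithStem {t ∈ p | t <+: s ∨ s <+: t} s := by
  obtain ⟨-, hclosed, -, hsucc⟩ := hp
  refine ⟨⟨hs, .inl List.prefix_rfl⟩, ?_, fun t ht => ht.2, ?_⟩
  · rintro t ⟨htp, hts | hst⟩ u hut
    · exact ⟨hclosed t htp u hut, .inl (hut.trans hts)⟩
    · exact ⟨hclosed t htp u hut, List.prefix_or_prefix_of_prefix hut hst⟩
  · rintro t ⟨htp, -⟩ hst
    exact (hsucc t htp (hstem.trans hst)).mono fun n hn =>
      ⟨hn, .inr (hst.trans (List.prefix_append t [n]))⟩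

variable {N : Set ℕ} {Q : ℕ → Set (List ℕ)}

theorem prefix_or_prefix_of_mem_of_stem_concat (hQ : ∀ n ∈ N, IsLaverTreeWithStem (Q n) (s ++ [n]))
    {n : ℕ} (hn : n ∈ N) (ht : t ∈ Q n) : t <+: s ∨ s ++ [n] <+: t := by
  rcases (hQ n hn).2.2.1 t ht with h | h
  · rcases List.prefix_concat_iff.mp h with rfl | h
    · exact .inr List.prefix_rfl
    · exact .inl h
  · exact .inr h

theorem biUnion (hN : N.Infinite) (hQ : ∀ n ∈ N, IsLaverTreeWithStem (Q n) (s ++ [n])) :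
    IsLaverTreeWithStem (⋃ n ∈ N, Q n) s := by
  obtain ⟨n₀, hn₀⟩ := hN.nonempty
  refine ⟨Set.mem_biUnion hn₀ ((hQ n₀ hn₀).2.1 _ (hQ n₀ hn₀).1 s (List.prefix_append s [n₀])),
    ?_, ?_, ?_⟩
  · intro t ht u hut
    obtain ⟨n, hn, ht⟩ := Set.mem_iUnion₂.mp ht
    exact Set.mem_biUnion hn ((hQ n hn).2.1 t ht u hut)
  · intro t ht
    obtain ⟨n, hn, ht⟩ := Set.mem_iUnion₂.mp ht
    exact (prefix_or_prefix_of_mem_of_stem_concat hQ hn ht).imp_right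
      (List.prefix_append s [n]).trans
  · intro t ht hst
    obtain ⟨n, hn, ht⟩ := Set.mem_iUnion₂.mp ht
    rcases prefix_or_prefix_of_mem_of_stem_concat hQ hn ht with hts | hnt
    · obtain rfl := hts.sublist.antisymm hst.sublist
      exact hN.mono fun m hm => Set.mem_biUnion hm (hQ m hm).1
    · exact ((hQ n hn).2.2.2 t ht hnt).mono fun m hm => Set.mem_biUnion hn hm

end IsLaverTreeWithStem

theorem isFront_biUnion {N : Set ℕ} {Q : ℕ → Set (List ℕ)} {B : Set (List ℕ)} {s : List ℕ}
    (hQ : ∀ n ∈ N, IsLaverTreeWithStem (Q n) (s ++ [n])) (hB : ∀ n ∈ N, IsFront B (Q n)) :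
    IsFront B (⋃ n ∈ N, Q n) := by
  intro x hx
  -- a branch of the union stays inside the piece `Q n` picked by its first node `s ++ [n]`
  have hlong : ∀ k, x s.length ∈ N ∧ (List.range (k + s.length + 1)).map x ∈ Q (x s.length) := by
    intro k
    obtain ⟨n, hn, hk⟩ := Set.mem_iUnion₂.mp (hx (k + s.length + 1))
    have hpre : s ++ [n] <+: (List.range (k + s.length + 1)).map x :=
      (hQ n hn).prefix_of_length_le hk (by simp)
    have hseg : s ++ [n] = (List.range (s.length + 1)).map x :=
      (List.prefix_of_prefix_length_le hpre (map_range_prefix_map_range x (by omega))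
        (by simp)).eq_of_length (by simp)
    rw [List.range_succ, List.map_append, List.map_singleton] at hseg
    obtain rfl : n = x s.length := by simpa using (List.append_inj' hseg rfl).2
    exact ⟨hn, hk⟩
  obtain ⟨hN, -⟩ := hlong 0
  exact hB _ hN x fun k =>
    (hQ _ hN).2.1 _ (hlong k).2 _ (map_range_prefix_map_range x (by omega))

section HasFrontSubtree

variable {p B : Set (List ℕ)} {stem s t : List ℕ}

theorem hasFrontSubtree_of_prefix_mem (hp : IsLaverTreeWithStem p stem) (hs : s ∈ p)
    (hstem : stem <+: s) (htB : t ∈ B) (hts : t <+: s) : HasFrontSubtree p B s :=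
  ⟨_, Set.sep_subset _ _, hp.cone hs hstem, (hp.cone hs hstem).isFront_of_prefix_mem htB hts⟩

theorem hasFrontSubtree_of_infinite (h : {n | HasFrontSubtree p B (s ++ [n])}.Infinite) :
    HasFrontSubtree p B s := by
  choose! Q hQp hQ hQB using fun n (hn : n ∈ {n | HasFrontSubtree p B (s ++ [n])}) => hn
  exact ⟨_, Set.iUnion₂_subset hQp, IsLaverTreeWithStem.biUnion h hQ, isFront_biUnion hQ hQB⟩

theorem isLaverTreeWithStem_frontlessSubtree (hp : IsLaverTreeWithStem p stem)
    (hstem : ¬ HasFrontSubtree p B stem) :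
    IsLaverTreeWithStem (frontlessSubtree p B stem) stem := by
  obtain ⟨hmem, hclosed, hcomp, hsucc⟩ := hp
  refine ⟨⟨hmem, fun u hu hu' => ?_⟩, ?_, fun t ht => hcomp t ht.1, ?_⟩
  · rwa [hu'.sublist.antisymm hu.sublist]
  · rintro t ⟨htp, ht⟩ u hut
    exact ⟨hclosed t htp u hut, fun v hv hvu => ht v hv (hvu.trans hut)⟩
  · rintro t ⟨htp, ht⟩ hst
    have hfin : {n | HasFrontSubtree p B (t ++ [n])}.Finite :=
      Set.not_infinite.mp fun h => ht t hst List.prefix_rfl (hasFrontSubtree_of_infinite h)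
    refine ((hsucc t htp hst).sdiff hfin).mono ?_
    rintro n ⟨hn, hnB⟩
    refine ⟨hn, fun u hu hut => ?_⟩
    rcases List.prefix_concat_iff.mp hut with rfl | hut
    · exact hnB
    · exact ht u hu hut

theorem frontlessSubtree_inter_eq_empty (hp : IsLaverTreeWithStem p stem)
    (hstem : ¬ HasFrontSubtree p B stem) : frontlessSubtree p B stem ∩ B = ∅ := by
  refine Set.eq_empty_of_forall_notMem ?_
  rintro t ⟨⟨htp, ht⟩, htB⟩
  rcases hp.2.2.1 t htp with hts | hst
  · exact hstem (hasFrontSubtree_of_prefix_mem hp hp.1 List.prefix_rfl htB hts)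
  · exact ht t hst List.prefix_rfl (hasFrontSubtree_of_prefix_mem hp htp hst htB List.prefix_rfl)

end HasFrontSubtree

theorem laver_front_dichotomy_general (p : Set (List ℕ)) (stem : List ℕ)
    (hp : IsLaverTreeWithStem p stem) (B : Set (List ℕ)) :
    (∃ q : Set (List ℕ), q ⊆ p ∧ IsLaverTreeWithStem q stem ∧ q ∩ B = ∅) ∨
    (∃ q : Set (List ℕ), q ⊆ p ∧ IsLaverTreeWithStem q stem ∧
      ∀ x : ℕ → ℕ, (∀ n, (List.range n).map x ∈ q) → ∃ n, (List.range n).map x ∈ B) := by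
  by_cases hstem : HasFrontSubtree p B stem
  · exact .inr hstem
  · exact .inl ⟨_, Set.sep_subset _ _, isLaverTreeWithStem_frontlessSubtree hp hstem,
      frontlessSubtree_inter_eq_empty hp hstem⟩

/-- Laver tree dichotomy: for every Laver tree `p` and every set `B` of nodes of `p`,
either there is a Laver subtree `q ⊆ p` with the same stem avoiding `B`, or there is
a Laver subtree `q ⊆ p` with the same stem in which `B` is a front, i.e. every infinite
branch of `q` has an initial segment in `B`. -/
theorem laver_front_dichotomy (p : Set (List ℕ)) (stem : List ℕ)
    (hp : IsLaverTreeWithStem p stem) (B : Set (List ℕ)) (hB : B ⊆ p) :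
    (∃ q : Set (List ℕ), q ⊆ p ∧ IsLaverTreeWithStem q stem ∧ q ∩ B = ∅) ∨
    (∃ q : Set (List ℕ), q ⊆ p ∧ IsLaverTreeWithStem q stem ∧
      ∀ x : ℕ → ℕ, (∀ n, (List.range n).map x ∈ q) → ∃ n, (List.range n).map x ∈ B) :=
  laver_front_dichotomy_general p stem hp B
end

section
/- (Lemma 5.1, second part) Assume that no union of fewer than 2^{ℵ₀} null subsets of 2^ω covers 2^ω (i.e., cov(𝒩) = 2^{ℵ₀}). Then there exists a strongly meager set X ⊆ 2^ω of cardinality 2^{ℵ₀}. -/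
open MeasureTheory Pointwise

/-!
Enumerate the Borel null sets as `(e i)` along the initial ordinal of `𝔠` and build, by transfinite
recursion, points `t i` and `x i`: `t i` avoids `x j + e i` for `j < i`, and `x i` avoids
`t j - e j` for `j ≤ i` and all earlier `x j`. Each choice avoids fewer than `𝔠` null sets, which
is possible because `cov(𝒩) = 𝔠`. Then `t i ∉ X + e i` for `X = {x i}`, and every null set lies in
some `e i`.
-/

open Set Filter Topology
open scoped Cardinal

universe u

namespace StronglyMeager

variable {G : Type u} [AddCommGroup G]

/-- `small` plays the role of the null sets; `sUnion_ne_univ` says `cov ≥ κ`. -/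
structure InvariantCovAtLeast (small : Set G → Prop) (κ : Cardinal) : Prop where
  singleton : ∀ a, small {a}
  vadd : ∀ (a : G) H, small H → small (a +ᵥ H)
  neg : ∀ H, small H → small (-H)
  sUnion_ne_univ : ∀ 𝒜 : Set (Set G), (∀ H ∈ 𝒜, small H) → #𝒜 < κ → ⋃₀ 𝒜 ≠ univ

noncomputable def avoidingPoint (𝒜 : Set (Set G)) : G :=
  Classical.epsilon fun p => p ∉ ⋃₀ 𝒜

theorem avoidingPoint_notMem {small : Set G → Prop} {κ : Cardinal}
    (h : InvariantCovAtLeast small κ) {𝒜 : Set (Set G)} (h𝒜 : ∀ H ∈ 𝒜, small H)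
    (hcard : #𝒜 < κ) {H : Set G} (hH : H ∈ 𝒜) : avoidingPoint 𝒜 ∉ H := by
  have hex : ∃ p, p ∉ ⋃₀ 𝒜 := (ne_univ_iff_exists_notMem _).mp (h.sUnion_ne_univ 𝒜 h𝒜 hcard)
  exact fun hp => Classical.epsilon_spec hex (mem_sUnion_of_mem hp hH)

section Construction

variable {I : Type u} [LinearOrder I] [WellFoundedLT I]

noncomputable def step (e : I → Set G) (i : I) (y : Iio i → G × G) : G × G :=
  let t := avoidingPoint (range fun j => (y j).2 +ᵥ e i)
  (t, avoidingPoint (insert (t +ᵥ -e i)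
    ((range fun j => (y j).1 +ᵥ -e j) ∪ range fun j => {(y j).2})))

noncomputable def construction (e : I → Set G) : I → G × G :=
  wellFounded_lt.fix fun i rec => step e i fun j => rec j j.2

noncomputable def witness (e : I → Set G) (i : I) : G := (construction e i).1

noncomputable def point (e : I → Set G) (i : I) : G := (construction e i).2

theorem construction_eq (e : I → Set G) (i : I) :
    construction e i = step e i fun j => construction e j :=
  wellFounded_lt.fix_eq _ i

theorem witness_eq (e : I → Set G) (i : I) :
    witness e i = avoidingPoint (range fun j : Iio i => point e j +ᵥ e i) := by
  rw [witness, construction_eq]; rfl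

theorem point_eq (e : I → Set G) (i : I) :
    point e i = avoidingPoint (insert (witness e i +ᵥ -e i)
      ((range fun j : Iio i => witness e j +ᵥ -e j) ∪ range fun j : Iio i => {point e j})) := by
  have hw : witness e i = (step e i fun j => construction e j).1 :=
    congrArg Prod.fst (construction_eq e i)
  rw [point, construction_eq, hw]; rfl

variable {small : Set G → Prop} {κ : Cardinal} {e : I → Set G}

theorem witness_notMem (h : InvariantCovAtLeast small κ) (he : ∀ i, small (e i))
    (hI : ∀ i : I, #(Iio i) < κ) {i j : I} (hji : j < i) :
    witness e i ∉ point e j +ᵥ e i := by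
  rw [witness_eq]
  refine avoidingPoint_notMem h ?_ (Cardinal.mk_range_le.trans_lt (hI i))
    (mem_range_self (⟨j, hji⟩ : Iio i))
  rintro _ ⟨k, rfl⟩
  exact h.vadd _ _ (he i)

theorem point_notMem (h : InvariantCovAtLeast small κ) (hκ : ℵ₀ ≤ κ) (he : ∀ i, small (e i))
    (hI : ∀ i : I, #(Iio i) < κ) (i : I) {H : Set G}
    (hH : H ∈ insert (witness e i +ᵥ -e i)
      ((range fun j : Iio i => witness e j +ᵥ -e j) ∪ range fun j : Iio i => {point e j})) :
    point e i ∉ H := by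
  rw [point_eq]
  refine avoidingPoint_notMem h ?_ ?_ hH
  · rintro _ (rfl | ⟨j, rfl⟩ | ⟨j, rfl⟩)
    exacts [h.vadd _ _ (h.neg _ (he i)), h.vadd _ _ (h.neg _ (he j)), h.singleton _]
  · have hlt : ∀ f : Iio i → Set G, #(range f) < κ := fun _ =>
      Cardinal.mk_range_le.trans_lt (hI i)
    refine Cardinal.mk_insert_le.trans_lt
      (Cardinal.add_lt_of_lt hκ ?_ (Cardinal.one_lt_aleph0.trans_le hκ))
    exact (Cardinal.mk_union_le _ _).trans_lt (Cardinal.add_lt_of_lt hκ (hlt _) (hlt _))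

theorem point_notMem_vadd_neg (h : InvariantCovAtLeast small κ) (hκ : ℵ₀ ≤ κ)
    (he : ∀ i, small (e i)) (hI : ∀ i : I, #(Iio i) < κ) {i j : I} (hji : j ≤ i) :
    point e i ∉ witness e j +ᵥ -e j := by
  obtain hji | rfl := hji.lt_or_eq
  · exact point_notMem h hκ he hI i (.inr (.inl ⟨⟨j, hji⟩, rfl⟩))
  · exact point_notMem h hκ he hI _ (mem_insert _ _)

theorem point_injective (h : InvariantCovAtLeast small κ) (hκ : ℵ₀ ≤ κ)
    (he : ∀ i, small (e i)) (hI : ∀ i : I, #(Iio i) < κ) : Function.Injective (point e) := by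
  have hne : ∀ i j : I, j < i → point e i ≠ point e j := fun i j hji =>
    point_notMem h hκ he hI i (.inr (.inr ⟨⟨j, hji⟩, rfl⟩))
  intro i j hij
  by_contra hij'
  obtain hlt | hlt := lt_or_gt_of_ne hij'
  exacts [hne j i hlt hij.symm, hne i j hlt hij]

/-- An earlier point is excluded when the witness is chosen, a later (or the same) point when
that point is chosen. -/
theorem range_point_add_ne_univ (h : InvariantCovAtLeast small κ) (hκ : ℵ₀ ≤ κ)
    (he : ∀ i, small (e i)) (hI : ∀ i : I, #(Iio i) < κ) (i : I) :
    range (point e) + e i ≠ univ := by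
  refine (ne_univ_iff_exists_notMem _).mpr ⟨witness e i, ?_⟩
  rintro ⟨_, ⟨j, rfl⟩, a, ha, hsum⟩
  obtain hji | hij := lt_or_ge j i
  · exact witness_notMem h he hI hji ⟨a, ha, hsum⟩
  · refine point_notMem_vadd_neg h hκ he hI hij ⟨-a, neg_mem_neg.mpr ha, ?_⟩
    simp only [← hsum, vadd_eq_add, add_neg_cancel_right]

end Construction

theorem exists_mk_eq_and_add_ne_univ {small : Set G → Prop} {κ : Cardinal}
    (h : InvariantCovAtLeast small κ) (hκ : ℵ₀ ≤ κ) {𝒩 : Set (Set G)} (h𝒩 : ∀ H ∈ 𝒩, small H)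
    (hne : 𝒩.Nonempty) (hcard : #𝒩 ≤ κ) :
    ∃ X : Set G, #X = κ ∧ ∀ H ∈ 𝒩, X + H ≠ univ := by
  obtain ⟨g⟩ : Nonempty (𝒩 ↪ κ.ord.ToType) := by
    rwa [← Cardinal.le_def, Cardinal.mk_ord_toType]
  have : Nonempty 𝒩 := hne.to_subtype
  set e : κ.ord.ToType → Set G := fun i => (Function.invFun g i : 𝒩)
  have he : ∀ i, small (e i) := fun i => h𝒩 _ (Function.invFun g i).2
  have hI : ∀ i : κ.ord.ToType, #(Iio i) < κ := fun i => by
    simpa using Cardinal.mk_Iio_lt i (by simp)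
  refine ⟨range (point e), ?_, fun H hH => ?_⟩
  · rw [Cardinal.mk_range_eq _ (point_injective h hκ he hI), Cardinal.mk_ord_toType]
  · obtain ⟨i, hi⟩ := Function.invFun_surjective g.injective ⟨H, hH⟩
    simpa only [e, hi] using range_point_add_ne_univ h hκ he hI i

end StronglyMeager

instance Pi.nhdsNE_zero_neBot {ι M : Type*} [Infinite ι] [Zero M] [Nontrivial M]
    [TopologicalSpace M] : (𝓝[≠] (0 : ι → M)).NeBot := by
  classical
  obtain ⟨a, ha⟩ := exists_ne (0 : M)
  rw [← mem_closure_iff_nhdsWithin_neBot]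
  refine mem_closure_of_tendsto (f := fun n : ι => Pi.single n a) (b := cofinite) ?_ ?_
  · refine tendsto_pi_nhds.mpr fun m => tendsto_const_nhds.congr' ?_
    filter_upwards [eventually_cofinite_ne m] with n hn
    simp [hn.symm]
  · exact Eventually.of_forall fun n => by simpa using ha

theorem MeasurableSpace.mk_measurableSet_le_continuum {α : Type*} [MeasurableSpace α]
    [MeasurableSpace.CountablyGenerated α] : #{t : Set α | MeasurableSet t} ≤ 𝔠 := by
  have hgen : #(MeasurableSpace.countableGeneratingSet α) ≤ 𝔠 :=
    (Cardinal.mk_le_aleph0_iff.mpr MeasurableSpace.countable_countableGeneratingSet).trans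
      Cardinal.aleph0_le_continuum
  have h := MeasurableSpace.cardinal_measurableSet_le_continuum hgen
  rwa [MeasurableSpace.generateFrom_countableGeneratingSet] at h

instance : cantorMeasure.IsAddHaarMeasure := by
  unfold cantorMeasure; infer_instance

/-- Lemma 5.1, second part: if no union of fewer than `2^ℵ₀` null subsets of `2^ω` covers
`2^ω` (i.e. `cov(𝒩) = 2^ℵ₀`), then there is a strongly meager set `X ⊆ 2^ω` of
cardinality `2^ℵ₀`. -/
theorem exists_stronglyMeager_of_size_continuum_of_cov_null
    (hcov : ∀ 𝒜 : Set (Set (ℕ → ZMod 2)), (∀ H ∈ 𝒜, cantorMeasure H = 0) →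
      Cardinal.mk 𝒜 < Cardinal.continuum → ⋃₀ 𝒜 ≠ Set.univ)
    : ∃ X : Set (ℕ → ZMod 2), Cardinal.mk X = Cardinal.continuum ∧
      ∀ H : Set (ℕ → ZMod 2), cantorMeasure H = 0 → X + H ≠ Set.univ := by
  have hnull : StronglyMeager.InvariantCovAtLeast (cantorMeasure · = 0) 𝔠 :=
    { singleton := measure_singleton
      vadd := fun a H hH => (measure_vadd _ a H).trans hH
      neg := fun H hH => by rwa [show -H = H by ext x; simp [CharTwo.neg_eq]]
      sUnion_ne_univ := hcov }
  obtain ⟨X, hXcard, hX⟩ := StronglyMeager.exists_mk_eq_and_add_ne_univ hnull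
    Cardinal.aleph0_le_continuum (𝒩 := {H | MeasurableSet H ∧ cantorMeasure H = 0})
    (fun _ hH => hH.2) ⟨∅, .empty, measure_empty⟩
    ((Cardinal.mk_le_mk_of_subset fun _ hH => hH.1).trans
      MeasurableSpace.mk_measurableSet_le_continuum)
  refine ⟨X, hXcard, fun H hH hXH => ?_⟩
  obtain ⟨H', hHH', hH'm, hH'0⟩ := exists_measurable_superset_of_null hH
  exact hX H' ⟨hH'm, hH'0⟩ (univ_subset_iff.mp (hXH ▸ add_subset_add_left hHH'))
end
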